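/- For fixed positive dissimilarities d_j > 0 (indexed by the nonempty subsets A_j of Ω), fixed δ > 0, β > 1, and α ∈ ℝ, the masses m_j = |A_j|^{−α/(β−1)} d_j^{−2/(β−1)} / (∑_k |A_k|^{−α/(β−1)} d_k^{−2/(β−1)} + δ^{−2/(β−1)}) together with m_∅ = 1 − ∑_j m_j minimize the function J(m) = ∑_j |A_j|^α m_j^β d_j^2 + δ^2 m_∅^β over all vectors (m_j, m_∅) of nonnegative reals summing to 1. -/
import Mathlib


open Finset

lemma rpow_tangent_line {β x y : ℝ} (hβ : 1 < β) (hx : 0 ≤ x) (hy : 0 ≤ y) :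
    x ^ β + β * x ^ (β - 1) * (y - x) ≤ y ^ β := by
  rcases hx.eq_or_lt with h | h
  · rw [← h]
    simp [Real.zero_rpow (by linarith : β ≠ 0),
      Real.zero_rpow (by linarith : β - 1 ≠ 0), Real.rpow_nonneg hy]
  · have ht : -1 ≤ y / x - 1 := by
      have : 0 ≤ y / x := div_nonneg hy h.le
      linarith
    have hb := one_add_mul_self_le_rpow_one_add ht hβ.le
    have h1 : (1 + (y / x - 1)) = y / x := by ring
    rw [h1, Real.div_rpow hy h.le] at hb
    have hxβ : 0 < x ^ β := Real.rpow_pos_of_pos h β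
    have hb2 := mul_le_mul_of_nonneg_right hb hxβ.le
    rw [div_mul_cancel₀ _ hxβ.ne'] at hb2
    have h3 : x ^ (β - 1) = x ^ β / x := Real.rpow_sub_one h.ne' β
    rw [h3]
    calc x ^ β + β * (x ^ β / x) * (y - x)
        = (1 + β * (y / x - 1)) * x ^ β := by field_simp
      _ ≤ y ^ β := hb2

/-- The ECM/MECM assignment update: for fixed positive dissimilarities `d A > 0`
(for nonempty `A ⊆ Ω`), `δ > 0`, `β > 1`, `α ∈ ℝ`, the masses
`m A = |A|^{−α/(β−1)} (d A)^{−2/(β−1)} / (∑ B |B|^{−α/(β−1)} (d B)^{−2/(β−1)} + δ^{−2/(β−1)})`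
together with `m∅ = 1 − ∑ A, m A` minimize
`J(μ) = ∑_A |A|^α μ_A^β (d A)^2 + δ^2 μ_∅^β` over all nonnegative vectors
`(μ_A, μ_∅)` summing to 1. -/
theorem ecm_assignment_update_optimal {Ω : Type*} [Fintype Ω] [DecidableEq Ω]
    [Nonempty Ω]
    (d : Finset Ω → ℝ) (hd : ∀ A : Finset Ω, A.Nonempty → 0 < d A)
    (δ α β : ℝ) (hδ : 0 < δ) (hβ : 1 < β)
    (m : Finset Ω → ℝ) (m₀ : ℝ)
    (hm : ∀ A : Finset Ω, A.Nonempty →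
      m A = (A.card : ℝ) ^ (-α / (β - 1)) * (d A) ^ (-2 / (β - 1)) /
        (∑ B ∈ univ.filter (fun B : Finset Ω => B.Nonempty),
            (B.card : ℝ) ^ (-α / (β - 1)) * (d B) ^ (-2 / (β - 1)) +
          δ ^ (-2 / (β - 1))))
    (hm₀ : m₀ = 1 - ∑ A ∈ univ.filter (fun B : Finset Ω => B.Nonempty), m A) :
    ∀ (μ : Finset Ω → ℝ) (μ₀ : ℝ), (∀ A, 0 ≤ μ A) → 0 ≤ μ₀ →
      ∑ A ∈ univ.filter (fun B : Finset Ω => B.Nonempty), μ A + μ₀ = 1 →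
      ∑ A ∈ univ.filter (fun B : Finset Ω => B.Nonempty),
          (A.card : ℝ) ^ α * (m A) ^ β * (d A) ^ 2 + δ ^ 2 * m₀ ^ β ≤
        ∑ A ∈ univ.filter (fun B : Finset Ω => B.Nonempty),
          (A.card : ℝ) ^ α * (μ A) ^ β * (d A) ^ 2 + δ ^ 2 * μ₀ ^ β := by
  intro μ μ₀ hμ hμ₀ hsum
  have hp : (0:ℝ) < β - 1 := by linarith
  set T : Finset (Finset Ω) := univ.filter (fun B : Finset Ω => B.Nonempty) with hT
  set N : ℝ := ∑ B ∈ T, (B.card : ℝ) ^ (-α / (β - 1)) * (d B) ^ (-2 / (β - 1)) with hN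
  set S : ℝ := N + δ ^ (-2 / (β - 1)) with hS
  have hmemT : ∀ B ∈ T, B.Nonempty := by
    intro B hB; simpa using (mem_filter.mp hB).2
  have hterm : ∀ B ∈ T, 0 < (B.card : ℝ) ^ (-α / (β - 1)) * (d B) ^ (-2 / (β - 1)) := by
    intro B hB
    have hB' := hmemT B hB
    have hc : (0:ℝ) < B.card := by exact_mod_cast hB'.card_pos
    exact mul_pos (Real.rpow_pos_of_pos hc _) (Real.rpow_pos_of_pos (hd B hB') _)
  have hδe : 0 < δ ^ (-2 / (β - 1)) := Real.rpow_pos_of_pos hδ _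
  have hNnn : 0 ≤ N := Finset.sum_nonneg fun B hB => (hterm B hB).le
  have hSpos : 0 < S := by rw [hS]; linarith
  have hm0 : m₀ = δ ^ (-2 / (β - 1)) / S := by
    have h1 : ∑ A ∈ T, m A = N / S := by
      rw [Finset.sum_congr rfl (fun A hA => hm A (hmemT A hA)), ← Finset.sum_div]
    rw [hm₀, h1, eq_div_iff hSpos.ne', sub_mul, div_mul_cancel₀ _ hSpos.ne', hS]
    ring
  have hmnn : ∀ A ∈ T, 0 ≤ m A := by
    intro A hA
    rw [hm A (hmemT A hA)]
    exact div_nonneg (hterm A hA).le hSpos.le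
  have hm0nn : 0 ≤ m₀ := by rw [hm0]; exact div_nonneg hδe.le hSpos.le
  set c : ℝ := S ^ (-(β - 1)) with hc
  have e1 : -α / (β - 1) * (β - 1) = -α := by field_simp
  have e2 : -2 / (β - 1) * (β - 1) = -2 := by field_simp
  -- key identity for nonempty sets
  have hkey : ∀ A ∈ T, (A.card : ℝ) ^ α * (d A) ^ 2 * (m A) ^ (β - 1) = c := by
    intro A hA
    have hA' := hmemT A hA
    have hcard : (0:ℝ) < A.card := by exact_mod_cast hA'.card_pos
    have hdA := hd A hA'
    rw [hm A hA',
      Real.div_rpow (mul_nonneg (Real.rpow_nonneg hcard.le _) (Real.rpow_nonneg hdA.le _)) hSpos.le,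
      Real.mul_rpow (Real.rpow_nonneg hcard.le _) (Real.rpow_nonneg hdA.le _),
      ← Real.rpow_mul hcard.le, ← Real.rpow_mul hdA.le, e1, e2,
      hc, Real.rpow_neg hSpos.le, div_eq_mul_inv]
    have hn1 : (A.card : ℝ) ^ α * (A.card : ℝ) ^ (-α) = 1 := by
      rw [← Real.rpow_add hcard]; norm_num
    have hd1 : (d A) ^ 2 * (d A) ^ (-2 : ℝ) = 1 := by
      rw [← Real.rpow_natCast (d A) 2, ← Real.rpow_add hdA]; norm_num
    calc (A.card : ℝ) ^ α * (d A) ^ 2 *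
          ((A.card : ℝ) ^ (-α) * (d A) ^ (-2 : ℝ) * (S ^ (β - 1))⁻¹)
        = ((A.card : ℝ) ^ α * (A.card : ℝ) ^ (-α)) * ((d A) ^ 2 * (d A) ^ (-2 : ℝ)) *
            (S ^ (β - 1))⁻¹ := by ring
      _ = (S ^ (β - 1))⁻¹ := by rw [hn1, hd1]; ring
  -- key identity for the empty set
  have hkey0 : δ ^ 2 * m₀ ^ (β - 1) = c := by
    rw [hm0, Real.div_rpow (Real.rpow_nonneg hδ.le _) hSpos.le,
      ← Real.rpow_mul hδ.le, e2, hc, Real.rpow_neg hSpos.le, div_eq_mul_inv]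
    have hd1 : δ ^ 2 * δ ^ (-2 : ℝ) = 1 := by
      rw [← Real.rpow_natCast δ 2, ← Real.rpow_add hδ]; norm_num
    calc δ ^ 2 * (δ ^ (-2 : ℝ) * (S ^ (β - 1))⁻¹)
        = (δ ^ 2 * δ ^ (-2 : ℝ)) * (S ^ (β - 1))⁻¹ := by ring
      _ = (S ^ (β - 1))⁻¹ := by rw [hd1]; ring
  -- per-term inequality
  have hstep : ∀ A ∈ T, (A.card : ℝ) ^ α * (m A) ^ β * (d A) ^ 2 + β * c * (μ A - m A) ≤
      (A.card : ℝ) ^ α * (μ A) ^ β * (d A) ^ 2 := by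
    intro A hA
    have hA' := hmemT A hA
    have hcard : (0:ℝ) < A.card := by exact_mod_cast hA'.card_pos
    have hw : 0 < (A.card : ℝ) ^ α * (d A) ^ 2 :=
      mul_pos (Real.rpow_pos_of_pos hcard α) (pow_pos (hd A hA') 2)
    have htan := rpow_tangent_line hβ (hmnn A hA) (hμ A)
    have h2 := mul_le_mul_of_nonneg_left htan hw.le
    calc (A.card : ℝ) ^ α * (m A) ^ β * (d A) ^ 2 + β * c * (μ A - m A)
        = ((A.card : ℝ) ^ α * (d A) ^ 2) *
            ((m A) ^ β + β * (m A) ^ (β - 1) * (μ A - m A)) := by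
          linear_combination β * (μ A - m A) * (hkey A hA).symm
      _ ≤ ((A.card : ℝ) ^ α * (d A) ^ 2) * (μ A) ^ β := h2
      _ = (A.card : ℝ) ^ α * (μ A) ^ β * (d A) ^ 2 := by ring
  have hstep0 : δ ^ 2 * m₀ ^ β + β * c * (μ₀ - m₀) ≤ δ ^ 2 * μ₀ ^ β := by
    have htan := rpow_tangent_line hβ hm0nn hμ₀
    have h2 := mul_le_mul_of_nonneg_left htan (pow_pos hδ 2).le
    calc δ ^ 2 * m₀ ^ β + β * c * (μ₀ - m₀)
        = δ ^ 2 * (m₀ ^ β + β * m₀ ^ (β - 1) * (μ₀ - m₀)) := by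
          linear_combination β * (μ₀ - m₀) * hkey0.symm
      _ ≤ δ ^ 2 * μ₀ ^ β := h2
  -- sum up
  have hSum := Finset.sum_le_sum hstep
  rw [Finset.sum_add_distrib, ← Finset.mul_sum, Finset.sum_sub_distrib] at hSum
  have hMsum : ∑ A ∈ T, m A + m₀ = 1 := by rw [hm₀]; ring
  have hzero : β * c * (∑ A ∈ T, μ A - ∑ A ∈ T, m A) = - (β * c * (μ₀ - m₀)) := by
    have h4 : (∑ A ∈ T, μ A - ∑ A ∈ T, m A) + (μ₀ - m₀) = 0 := by linarith
    linear_combination β * c * h4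
  linarith [hSum, hstep0]
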